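/- arXiv:2503.16990 — 2 statements merged into one kernel-verified Lean document; each statement's English description precedes it below -/
import Mathlib

section
/- Let k be a field of characteristic zero and B a standard graded artinian k-algebra. If A = B ⊗_k k[x]/(x^d) has the strong Lefschetz property for some integer d ≥ 1, then B has the strong Lefschetz property. -/
open scoped BigOperators

/-- Multiplication by `a` is injective as a map on the subspace `V`. -/
def MulInjOn {k R : Type*} [Field k] [CommRing R] [Algebra k R]
    (V : Submodule k R) (a : R) : Prop :=
  ∀ v ∈ V, a * v = 0 → v = 0

/-- Multiplication by `a` maps the subspace `V` onto the subspace `W`. -/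
def MulSurjOnto {k R : Type*} [Field k] [CommRing R] [Algebra k R]
    (V W : Submodule k R) (a : R) : Prop :=
  ∀ w ∈ W, ∃ v ∈ V, a * v = w

/-- The multiplication map `·a : V → W` has full rank: it is injective or surjective. -/
def MulFullRank {k R : Type*} [Field k] [CommRing R] [Algebra k R]
    (V W : Submodule k R) (a : R) : Prop :=
  MulInjOn V a ∨ MulSurjOnto V W a

/-- `𝒜` is the grading of a standard graded artinian `k`-algebra structure on `R`:
the components form an internal direct sum, vanish in negative degrees, are
multiplicative, the degree-zero part is spanned by `1`, the algebra is generated in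
degree one, and `R` is a finite-dimensional `k`-vector space (equivalently, artinian). -/
structure IsStdGradedArtinian (k : Type*) [Field k] (R : Type*) [CommRing R] [Algebra k R]
    (𝒜 : ℤ → Submodule k R) : Prop where
  internal : DirectSum.IsInternal 𝒜
  one_mem : (1 : R) ∈ 𝒜 0
  mul_mem : ∀ {i j : ℤ} {a b : R}, a ∈ 𝒜 i → b ∈ 𝒜 j → a * b ∈ 𝒜 (i + j)
  neg_bot : ∀ i : ℤ, i < 0 → 𝒜 i = ⊥
  zero_spanOne : 𝒜 0 = Submodule.span k {(1 : R)}
  succ_eq : ∀ i : ℤ, 0 ≤ i → 𝒜 (i + 1) = 𝒜 1 * 𝒜 i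
  finiteDim : FiniteDimensional k R

/-- `A` (graded by `ℬ`) is the extension `B ⊗ₖ k[x]/(x^d)` of `B` (graded by `𝒜`):
`φ` is the canonical inclusion of `B`, `x` has degree one with `x^d = 0`, and each
graded component decomposes as `ℬ j = ⊕_{q=0}^{d-1} x^q · φ(𝒜 (j - q))`. -/
structure IsCIExtension {k B A : Type*} [Field k] [CommRing B] [Algebra k B]
    [CommRing A] [Algebra k A]
    (𝒜 : ℤ → Submodule k B) (ℬ : ℤ → Submodule k A)
    (φ : B →ₐ[k] A) (x : A) (d : ℕ) : Prop where
  map_mem : ∀ (j : ℤ) (b : B), b ∈ 𝒜 j → φ b ∈ ℬ j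
  x_mem : x ∈ ℬ 1
  x_pow : x ^ d = 0
  decomp_mem : ∀ (j : ℤ) (f : Fin d → B), (∀ q : Fin d, f q ∈ 𝒜 (j - ((q : ℕ) : ℤ))) →
    (∑ q : Fin d, x ^ (q : ℕ) * φ (f q)) ∈ ℬ j
  decomp_exists : ∀ (j : ℤ), ∀ c ∈ ℬ j, ∃ f : Fin d → B,
    (∀ q : Fin d, f q ∈ 𝒜 (j - ((q : ℕ) : ℤ))) ∧ c = ∑ q : Fin d, x ^ (q : ℕ) * φ (f q)
  decomp_unique : ∀ (j : ℤ) (f : Fin d → B), (∀ q : Fin d, f q ∈ 𝒜 (j - ((q : ℕ) : ℤ))) →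
    (∑ q : Fin d, x ^ (q : ℕ) * φ (f q)) = 0 → ∀ q : Fin d, f q = 0

/-- `A` (graded by `ℬ`) is the extension `B ⊗ₖ k[x₁,…,xₙ]/(x₁^{d₁},…,xₙ^{dₙ})` of `B`
(graded by `𝒜`). -/
structure IsMultiCIExtension {k B A : Type*} [Field k] [CommRing B] [Algebra k B]
    [CommRing A] [Algebra k A] {n : ℕ}
    (𝒜 : ℤ → Submodule k B) (ℬ : ℤ → Submodule k A)
    (φ : B →ₐ[k] A) (x : Fin n → A) (dv : Fin n → ℕ) : Prop where
  map_mem : ∀ (j : ℤ) (b : B), b ∈ 𝒜 j → φ b ∈ ℬ j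
  x_mem : ∀ m : Fin n, x m ∈ ℬ 1
  x_pow : ∀ m : Fin n, x m ^ dv m = 0
  decomp_mem : ∀ (j : ℤ) (f : ((m : Fin n) → Fin (dv m)) → B),
    (∀ e, f e ∈ 𝒜 (j - ∑ m : Fin n, ((e m : ℕ) : ℤ))) →
    (∑ e : (m : Fin n) → Fin (dv m), (∏ m : Fin n, x m ^ ((e m : ℕ))) * φ (f e)) ∈ ℬ j
  decomp_exists : ∀ (j : ℤ), ∀ c ∈ ℬ j, ∃ f : ((m : Fin n) → Fin (dv m)) → B,
    (∀ e, f e ∈ 𝒜 (j - ∑ m : Fin n, ((e m : ℕ) : ℤ))) ∧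
    c = ∑ e : (m : Fin n) → Fin (dv m), (∏ m : Fin n, x m ^ ((e m : ℕ))) * φ (f e)
  decomp_unique : ∀ (j : ℤ) (f : ((m : Fin n) → Fin (dv m)) → B),
    (∀ e, f e ∈ 𝒜 (j - ∑ m : Fin n, ((e m : ℕ) : ℤ))) →
    (∑ e : (m : Fin n) → Fin (dv m), (∏ m : Fin n, x m ^ ((e m : ℕ))) * φ (f e)) = 0 →
    ∀ e, f e = 0

/-- The weak Lefschetz property. -/
def HasWLP {k R : Type*} [Field k] [CommRing R] [Algebra k R]
    (𝒜 : ℤ → Submodule k R) : Prop :=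
  ∃ ℓ ∈ 𝒜 1, ∀ i : ℤ, 0 ≤ i → MulFullRank (𝒜 i) (𝒜 (i + 1)) ℓ

/-- The strong Lefschetz property. -/
def HasSLP {k R : Type*} [Field k] [CommRing R] [Algebra k R]
    (𝒜 : ℤ → Submodule k R) : Prop :=
  ∃ ℓ ∈ 𝒜 1, ∀ i : ℤ, 0 ≤ i → ∀ t : ℕ, 1 ≤ t → MulFullRank (𝒜 i) (𝒜 (i + t)) (ℓ ^ t)

/-- The Hilbert function of the graded algebra. -/
noncomputable def hilb {k R : Type*} [Field k] [CommRing R] [Algebra k R]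
    (𝒜 : ℤ → Submodule k R) (i : ℤ) : ℕ :=
  Module.finrank k (𝒜 i)

/-- The algebra is almost centered. -/
def AlmostCentered {k R : Type*} [Field k] [CommRing R] [Algebra k R]
    (𝒜 : ℤ → Submodule k R) : Prop :=
  ∀ i j : ℤ, i < j →
    (hilb 𝒜 i < hilb 𝒜 j → ∀ s : ℕ, hilb 𝒜 (i - s) ≤ hilb 𝒜 (j + s)) ∧
    (hilb 𝒜 j < hilb 𝒜 i → ∀ s : ℕ, hilb 𝒜 (j + s) ≤ hilb 𝒜 (i - s))

/-- `binomZ t j` is the binomial coefficient `t` choose `j` for an integer `j`,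
equal to `0` for `j < 0` or `j > t`. -/
def binomZ (t : ℕ) (j : ℤ) : ℤ := if 0 ≤ j then (t.choose j.toNat : ℤ) else 0

/-- The `(d-p) × (d-p)` integer matrix `C_{t,p,d}` whose `(r,c)` entry (with `1 ≤ r,c ≤ d-p`)
is `binom(t, d+1-r-c)`. -/
def Cmat (t p d : ℕ) : Matrix (Fin (d - p)) (Fin (d - p)) ℤ :=
  Matrix.of fun r c => binomZ t ((d : ℤ) - 1 - (r : ℕ) - (c : ℕ))

/-- The characteristic of `k` is zero, or a prime not dividing the integer `N`. -/
def CharCond (k : Type*) [Field k] (N : ℤ) : Prop :=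
  CharZero k ∨ ∃ p : ℕ, p.Prime ∧ CharP k p ∧ ¬ ((p : ℤ) ∣ N)

/-!
If `L = φ ℓ + z` is a Lefschetz element of `A`, with `z ∈ x A` (so `z ^ d = 0`), then
`L ^ (t + d - 1) = φ (ℓ ^ t) * M` for a form `M` of degree `d - 1`, because every term of the
binomial expansion that survives `z ^ d = 0` still carries `φ ℓ ^ t`. Hence a kernel vector
`u` of `·ℓ ^ t` on `B` gives the kernel vector `φ u` of `·L ^ (t + d - 1)` on `A`, and a
preimage of `x ^ (d - 1) * φ w` under `·L ^ (t + d - 1)` yields, in its `x ^ (d - 1)`-coefficient,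
a preimage of `w` under `·ℓ ^ t`.
-/

theorem IsStdGradedArtinian.gradedMonoid {k R : Type*} [Field k] [CommRing R] [Algebra k R]
    {𝒜 : ℤ → Submodule k R} (h : IsStdGradedArtinian k R 𝒜) : SetLike.GradedMonoid 𝒜 where
  one_mem := h.one_mem
  mul_mem _ _ _ _ := h.mul_mem

theorem add_pow_eq_pow_mul_of_pow_eq_zero {R : Type*} [CommSemiring R] {a z : R} {e : ℕ}
    (hz : z ^ (e + 1) = 0) (t : ℕ) :
    (a + z) ^ (t + e) =
      a ^ t * ∑ m ∈ Finset.range (e + 1), (t + e).choose m • (z ^ m * a ^ (e - m)) := by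
  rw [add_comm a z, add_pow, Finset.mul_sum]
  refine (Finset.sum_subset (Finset.range_subset_range.mpr (by omega)) ?_).symm.trans
    (Finset.sum_congr rfl fun m hm => ?_)
  · intro m _ hm
    rw [pow_eq_zero_of_le (by simpa using hm) hz]
    simp
  · rw [Finset.mem_range] at hm
    rw [show t + e - m = t + (e - m) by omega, pow_add, nsmul_eq_mul]
    ring

theorem exists_mem_add_pow_eq_pow_mul {R σ : Type*} [CommSemiring R] [SetLike σ R]
    [AddSubmonoidClass σ R] {ℬ : ℤ → σ} [SetLike.GradedMonoid ℬ] {a z : R}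
    (ha : a ∈ ℬ 1) (hz : z ∈ ℬ 1) {e : ℕ} (hz_pow : z ^ (e + 1) = 0) (t : ℕ) :
    ∃ M ∈ ℬ e, (a + z) ^ (t + e) = a ^ t * M := by
  refine ⟨_, sum_mem fun m hm => nsmul_mem ?_ _, add_pow_eq_pow_mul_of_pow_eq_zero hz_pow t⟩
  have hm : m ≤ e := Nat.lt_succ_iff.mp (Finset.mem_range.mp hm)
  convert SetLike.mul_mem_graded (SetLike.pow_mem_graded m hz) (SetLike.pow_mem_graded (e - m) ha)
  rw [← add_nsmul, Nat.add_sub_cancel' hm, nsmul_one]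

theorem Pi.single_apply_mem {ι R σ : Type*} [DecidableEq ι] [Zero R] [SetLike σ R]
    [ZeroMemClass σ R] {S : ι → σ} {p : ι} {w : R} (hw : w ∈ S p) (q : ι) :
    (Pi.single p w : ι → R) q ∈ S q := by
  by_cases hq : q = p
  · subst hq
    simp [hw]
  · rw [Pi.single_eq_of_ne hq]
    exact zero_mem (S q)

namespace IsCIExtension

variable {k B A : Type*} [Field k] [CommRing B] [Algebra k B] [CommRing A] [Algebra k A]
  {𝒜 : ℤ → Submodule k B} {ℬ : ℤ → Submodule k A} {φ : B →ₐ[k] A} {x : A}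

theorem sum_pow_mul_map_single {d : ℕ} (p : Fin d) (w : B) :
    ∑ q : Fin d, x ^ (q : ℕ) * φ ((Pi.single p w : Fin d → B) q) = x ^ (p : ℕ) * φ w := by
  rw [Fintype.sum_eq_single p fun q hq => by rw [Pi.single_eq_of_ne hq, map_zero, mul_zero],
    Pi.single_eq_same]

theorem eq_of_sum_eq {d : ℕ} (hext : IsCIExtension 𝒜 ℬ φ x d) {j : ℤ} {f g : Fin d → B}
    (hf : ∀ q : Fin d, f q ∈ 𝒜 (j - ((q : ℕ) : ℤ)))
    (hg : ∀ q : Fin d, g q ∈ 𝒜 (j - ((q : ℕ) : ℤ)))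
    (h : ∑ q : Fin d, x ^ (q : ℕ) * φ (f q) = ∑ q : Fin d, x ^ (q : ℕ) * φ (g q)) : f = g := by
  funext q
  refine sub_eq_zero.mp (hext.decomp_unique j (f - g) (fun q => sub_mem (hf q) (hg q)) ?_ q)
  simpa [mul_sub, Finset.sum_sub_distrib] using sub_eq_zero.mpr h

variable {e : ℕ}

theorem eq_zero_of_map_eq_zero (hext : IsCIExtension 𝒜 ℬ φ x (e + 1)) {j : ℤ} {u : B}
    (hu : u ∈ 𝒜 j) (hφu : φ u = 0) : u = 0 := by
  have := hext.eq_of_sum_eq (f := Pi.single 0 u) (g := 0)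
    (Pi.single_apply_mem (S := fun q : Fin (e + 1) => 𝒜 (j - ((q : ℕ) : ℤ))) (by simpa using hu))
    (fun _ => zero_mem _) (by simpa [sum_pow_mul_map_single] using hφu)
  simpa using congrFun this 0

theorem exists_eq_map_add_mul (hext : IsCIExtension 𝒜 ℬ φ x (e + 1)) {j : ℤ} {L : A}
    (hL : L ∈ ℬ j) :
    ∃ ℓ ∈ 𝒜 j, ∃ y : A, L = φ ℓ + x * y := by
  obtain ⟨f, hf, rfl⟩ := hext.decomp_exists j L hL
  refine ⟨f 0, by simpa using hf 0, ∑ q : Fin e, x ^ (q : ℕ) * φ (f q.succ), ?_⟩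
  simp [Fin.sum_univ_succ, Finset.mul_sum, pow_succ', mul_assoc]

theorem mulInjOn_of_map_mul (hext : IsCIExtension 𝒜 ℬ φ x (e + 1)) {i : ℤ} {a : B} {M : A}
    (h : MulInjOn (ℬ i) (φ a * M)) : MulInjOn (𝒜 i) a := by
  intro u hu hau
  refine hext.eq_zero_of_map_eq_zero hu (h _ (hext.map_mem i u hu) ?_)
  rw [mul_right_comm, ← map_mul, hau, map_zero, zero_mul]

theorem mulSurjOnto_of_map_mul [SetLike.GradedMonoid 𝒜] [SetLike.GradedMonoid ℬ]
    (hext : IsCIExtension 𝒜 ℬ φ x (e + 1)) {i : ℤ} {t : ℕ} {a : B} {M : A} (ha : a ∈ 𝒜 t)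
    (hM : M ∈ ℬ e) (h : MulSurjOnto (ℬ i) (ℬ (i + ((t + e : ℕ) : ℤ))) (φ a * M)) :
    MulSurjOnto (𝒜 i) (𝒜 (i + t)) a := by
  intro w hw
  have hsingle := Pi.single_apply_mem
    (S := fun q : Fin (e + 1) => 𝒜 (i + ((t + e : ℕ) : ℤ) - ((q : ℕ) : ℤ)))
    (p := Fin.last e) (w := w) (by convert hw using 2; push_cast; ring)
  obtain ⟨v, hv, hvw⟩ := h _ (by
    simpa [sum_pow_mul_map_single] using hext.decomp_mem _ _ hsingle)
  obtain ⟨g, hg, hMv⟩ := hext.decomp_exists _ (M * v) (SetLike.mul_mem_graded hM hv)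
  have hag : ∀ q : Fin (e + 1), a * g q ∈ 𝒜 (i + ((t + e : ℕ) : ℤ) - ((q : ℕ) : ℤ)) := by
    intro q
    convert SetLike.mul_mem_graded ha (hg q) using 2
    push_cast
    ring
  have hcoeff := hext.eq_of_sum_eq hag hsingle (by
    rw [sum_pow_mul_map_single, Fin.val_last, ← hvw, mul_assoc, hMv, Finset.mul_sum]
    simp only [map_mul, mul_left_comm])
  refine ⟨g (Fin.last e), by simpa using hg (Fin.last e), ?_⟩
  simpa using congrFun hcoeff (Fin.last e)

theorem mulFullRank_of_map_mul [SetLike.GradedMonoid 𝒜] [SetLike.GradedMonoid ℬ]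
    (hext : IsCIExtension 𝒜 ℬ φ x (e + 1)) {i : ℤ} {t : ℕ} {a : B} {M : A} (ha : a ∈ 𝒜 t)
    (hM : M ∈ ℬ e) (h : MulFullRank (ℬ i) (ℬ (i + ((t + e : ℕ) : ℤ))) (φ a * M)) :
    MulFullRank (𝒜 i) (𝒜 (i + t)) a :=
  h.imp hext.mulInjOn_of_map_mul (hext.mulSurjOnto_of_map_mul ha hM)

end IsCIExtension

theorem statement_14_general {k B A : Type} [Field k]
    [CommRing B] [Algebra k B] [CommRing A] [Algebra k A]
    (𝒜 : ℤ → Submodule k B) (ℬ : ℤ → Submodule k A)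
    (hB : IsStdGradedArtinian k B 𝒜) (hA : IsStdGradedArtinian k A ℬ)
    (d : ℕ) (hd : 1 ≤ d) (φ : B →ₐ[k] A) (x : A)
    (hext : IsCIExtension 𝒜 ℬ φ x d)
    (hSLP : HasSLP ℬ) :
    HasSLP 𝒜 := by
  obtain ⟨e, rfl⟩ : ∃ e, d = e + 1 := ⟨d - 1, by omega⟩
  have := hA.gradedMonoid
  have := hB.gradedMonoid
  obtain ⟨L, hL, hL_SLP⟩ := hSLP
  obtain ⟨ℓ, hℓ, y, rfl⟩ := hext.exists_eq_map_add_mul hL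
  have hφℓ : φ ℓ ∈ ℬ 1 := hext.map_mem 1 ℓ hℓ
  have hxy : x * y ∈ ℬ 1 := by simpa using sub_mem hL hφℓ
  have hxy_pow : (x * y) ^ (e + 1) = 0 := by rw [mul_pow, hext.x_pow, zero_mul]
  refine ⟨ℓ, hℓ, fun i hi t ht => ?_⟩
  obtain ⟨M, hM, hLpow⟩ := exists_mem_add_pow_eq_pow_mul hφℓ hxy hxy_pow t
  refine hext.mulFullRank_of_map_mul (by simpa using SetLike.pow_mem_graded t hℓ) hM ?_
  rw [map_pow, ← hLpow]
  exact hL_SLP i hi (t + e) (by omega)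

/-- Over a field `k` of characteristic zero, if
`A = B ⊗ₖ k[x]/(x^d)` has the strong Lefschetz property for some `d ≥ 1`, then the
standard graded artinian `k`-algebra `B` has the strong Lefschetz property. -/
theorem statement_14 {k B A : Type} [Field k] [CharZero k]
    [CommRing B] [Algebra k B] [CommRing A] [Algebra k A]
    (𝒜 : ℤ → Submodule k B) (ℬ : ℤ → Submodule k A)
    (hB : IsStdGradedArtinian k B 𝒜) (hA : IsStdGradedArtinian k A ℬ)
    (d : ℕ) (hd : 1 ≤ d) (φ : B →ₐ[k] A) (x : A)
    (hext : IsCIExtension 𝒜 ℬ φ x d)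
    (hSLP : HasSLP ℬ) :
    HasSLP 𝒜 :=
  statement_14_general 𝒜 ℬ hB hA d hd φ x hext hSLP
end

section
/- Let k be a field of characteristic zero and let A be a standard graded artinian k-algebra with the strong Lefschetz property and socle degree D, with Hilbert function h_i = dim_k A_i (h_i = 0 for i < 0 and i > D). Then A is almost centered if and only if either h_{i−1} ≤ h_{D−i} ≤ h_i for all 0 ≤ i ≤ ⌊D/2⌋, or h_{D−i+1} ≤ h_i ≤ h_{D−i} for all 0 ≤ i ≤ ⌊D/2⌋. -/
open scoped BigOperators

section Aux

variable {k A : Type} [Field k] [CommRing A] [Algebra k A]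

lemma finrank_le_of_mulSurjOnto [FiniteDimensional k A] (V W : Submodule k A) (a : A)
    (h : MulSurjOnto V W a) : Module.finrank k W ≤ Module.finrank k V := by
  set f : V →ₗ[k] A := (LinearMap.mulLeft k a).comp V.subtype with hf
  have hW : W ≤ LinearMap.range f := by
    intro w hw
    obtain ⟨v, hv, hav⟩ := h w hw
    exact ⟨⟨v, hv⟩, hav⟩
  calc Module.finrank k W ≤ Module.finrank k (LinearMap.range f) :=
        Submodule.finrank_mono hW
    _ ≤ Module.finrank k V := LinearMap.finrank_range_le f

lemma finrank_le_of_mulInjOn [FiniteDimensional k A] (V W : Submodule k A) (a : A)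
    (hmap : ∀ v ∈ V, a * v ∈ W) (hinj : MulInjOn V a) :
    Module.finrank k V ≤ Module.finrank k W := by
  set f : V →ₗ[k] W := LinearMap.codRestrict W ((LinearMap.mulLeft k a).comp V.subtype)
    (fun v => hmap v.1 v.2) with hf
  have hinjf : Function.Injective f := by
    rw [← LinearMap.ker_eq_bot, LinearMap.ker_eq_bot']
    intro v hv
    have h0 : a * (v : A) = 0 := by
      have := congrArg (Subtype.val : W → A) hv
      simpa [hf, LinearMap.codRestrict, LinearMap.mulLeft_apply] using this
    exact Subtype.ext (hinj v.1 v.2 h0)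
  exact LinearMap.finrank_le_finrank_of_injective hinjf

/-- Once the Hilbert function strictly decreases, it stays nonincreasing. -/
lemma surj_propagate {𝒜 : ℤ → Submodule k A} (hA : IsStdGradedArtinian k A 𝒜)
    {ℓ : A} (hℓ1 : ℓ ∈ 𝒜 1)
    (hfr : ∀ i : ℤ, 0 ≤ i → MulFullRank (𝒜 i) (𝒜 (i + 1)) ℓ) :
    ∀ x y : ℤ, x ≤ y → hilb 𝒜 (x + 1) < hilb 𝒜 x → hilb 𝒜 (y + 1) ≤ hilb 𝒜 y := by
  intro x y hxy hdec
  have hfin := hA.finiteDim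
  have hcongr : ∀ i j : ℤ, i = j → 𝒜 i = 𝒜 j := fun i j hij => by rw [hij]
  have hx0 : 0 ≤ x := by
    by_contra hx
    push_neg at hx
    have hb : 𝒜 x = ⊥ := hA.neg_bot x hx
    have : hilb 𝒜 x = 0 := by rw [hilb, hb, finrank_bot]
    omega
  have key : ∀ n : ℕ, MulSurjOnto (𝒜 (x + n)) (𝒜 (x + n + 1)) ℓ := by
    intro n
    induction n with
    | zero =>
      simp only [Nat.cast_zero, add_zero]
      rcases hfr x hx0 with hinj | hsurj
      · exfalso
        have hle := finrank_le_of_mulInjOn (𝒜 x) (𝒜 (x + 1)) ℓ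
          (fun v hv => by
            have := hA.mul_mem hℓ1 hv
            rwa [hcongr (1 + x) (x + 1) (by ring)] at this) hinj
        simp only [hilb] at hdec
        omega
      · exact hsurj
    | succ n ih =>
      rw [show x + ((n + 1 : ℕ) : ℤ) = x + (n : ℤ) + 1 by push_cast; ring]
      intro w hw
      have heq : 𝒜 (x + (n : ℤ) + 1 + 1) = 𝒜 1 * 𝒜 (x + n + 1) :=
        hA.succ_eq (x + n + 1) (by omega)
      rw [heq] at hw
      have hle : 𝒜 1 * 𝒜 (x + n + 1) ≤
          Submodule.map (LinearMap.mulLeft k ℓ) (𝒜 (x + n + 1)) := by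
        apply Submodule.mul_le.mpr
        intro u hu v hv
        obtain ⟨v', hv', hlv⟩ := ih v hv
        refine ⟨u * v', ?_, ?_⟩
        · have := hA.mul_mem hu hv'
          rwa [hcongr (1 + (x + n)) (x + n + 1) (by ring)] at this
        · simp only [LinearMap.mulLeft_apply]
          rw [← hlv]; ring
      obtain ⟨v, hv, hveq⟩ := hle hw
      refine ⟨v, hv, ?_⟩
      simpa [LinearMap.mulLeft_apply] using hveq
  have hyx : y = x + ((y - x).toNat : ℤ) := by omega
  have hs := key (y - x).toNat
  rw [← hyx] at hs
  exact finrank_le_of_mulSurjOnto _ _ ℓ hs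

/-- At level `c`, the Hilbert function dominates on the left. -/
def LeftDom (h : ℤ → ℕ) (c : ℤ) : Prop := ∀ a b : ℤ, a ≤ b → a + b = c → h b ≤ h a

/-- At level `c`, the Hilbert function dominates on the right. -/
def RightDom (h : ℤ → ℕ) (c : ℤ) : Prop := ∀ a b : ℤ, a ≤ b → a + b = c → h a ≤ h b

lemma leftDom_step (h : ℤ → ℕ)
    (S : ∀ x y : ℤ, x ≤ y → h (x + 1) < h x → h (y + 1) ≤ h y)
    (c : ℤ) (hP : LeftDom h c) : LeftDom h (c + 1) := by
  intro a b hab hsum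
  rcases eq_or_lt_of_le hab with heq | hlt
  · rw [heq]
  by_cases hcase : h (a - 1) ≤ h a
  · exact le_trans (hP (a - 1) b (by omega) (by omega)) hcase
  · push_neg at hcase
    have hS := S (a - 1) (b - 1) (by omega)
      (by have e : a - 1 + 1 = a := by omega
          rw [e]; exact hcase)
    have e : b - 1 + 1 = b := by omega
    rw [e] at hS
    exact le_trans hS (hP a (b - 1) (by omega) (by omega))

lemma rightDom_step (h : ℤ → ℕ)
    (S : ∀ x y : ℤ, x ≤ y → h (x + 1) < h x → h (y + 1) ≤ h y)
    (c : ℤ) (hQ : RightDom h c) : RightDom h (c - 1) := by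
  intro a b hab hsum
  rcases eq_or_lt_of_le hab with heq | hlt
  · rw [heq]
  by_cases hcase : h a ≤ h (a + 1)
  · exact le_trans hcase (hQ (a + 1) b (by omega) (by omega))
  · push_neg at hcase
    have hS := S a b (le_of_lt hlt) hcase
    exact le_trans (hQ a (b + 1) (by omega) (by omega)) hS

lemma leftDom_mono (h : ℤ → ℕ)
    (S : ∀ x y : ℤ, x ≤ y → h (x + 1) < h x → h (y + 1) ≤ h y)
    (c : ℤ) (hP : LeftDom h c) : ∀ d : ℤ, c ≤ d → LeftDom h d := by
  have main : ∀ n : ℕ, LeftDom h (c + n) := by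
    intro n
    induction n with
    | zero => simpa using hP
    | succ n ih =>
      have := leftDom_step h S (c + n) ih
      intro a b hab hsum
      exact this a b hab (by push_cast at hsum ⊢; omega)
  intro d hd a b hab hsum
  exact main (d - c).toNat a b hab (by omega)

lemma rightDom_mono (h : ℤ → ℕ)
    (S : ∀ x y : ℤ, x ≤ y → h (x + 1) < h x → h (y + 1) ≤ h y)
    (c : ℤ) (hQ : RightDom h c) : ∀ d : ℤ, d ≤ c → RightDom h d := by
  have main : ∀ n : ℕ, RightDom h (c - n) := by
    intro n
    induction n with
    | zero => simpa using hQ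
    | succ n ih =>
      have := rightDom_step h S (c - n) ih
      intro a b hab hsum
      exact this a b hab (by push_cast at hsum ⊢; omega)
  intro d hd a b hab hsum
  exact main (c - d).toNat a b hab (by omega)

lemma ac_dom (h : ℤ → ℕ)
    (hAC : ∀ i j : ℤ, i < j →
      (h i < h j → ∀ s : ℕ, h (i - s) ≤ h (j + s)) ∧
      (h j < h i → ∀ s : ℕ, h (j + s) ≤ h (i - s)))
    (c : ℤ) : LeftDom h c ∨ RightDom h c := by
  by_contra hcon
  push_neg at hcon
  obtain ⟨hnp, hnq⟩ := hcon
  simp only [LeftDom, RightDom, not_forall] at hnp hnq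
  obtain ⟨a, b, hab, hsum, hlt⟩ := hnp
  obtain ⟨a', b', hab', hsum', hlt'⟩ := hnq
  push_neg at hlt hlt'
  have hab2 : a < b := lt_of_le_of_ne hab (by rintro rfl; omega)
  have hab2' : a' < b' := lt_of_le_of_ne hab' (by rintro rfl; omega)
  rcases le_total a' a with hle | hle
  · have := (hAC a b hab2).1 hlt (a - a').toNat
    have e1 : a - ((a - a').toNat : ℤ) = a' := by omega
    have e2 : b + ((a - a').toNat : ℤ) = b' := by omega
    rw [e2, e1] at this
    omega
  · have := (hAC a' b' hab2').2 hlt' (a' - a).toNat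
    have e1 : a' - ((a' - a).toNat : ℤ) = a := by omega
    have e2 : b' + ((a' - a).toNat : ℤ) = b := by omega
    rw [e2, e1] at this
    omega

end Aux

/-- Over a field `k` of characteristic zero, let `A` be a standard graded
artinian `k`-algebra with the strong Lefschetz property and socle degree `D`.  Then `A` is
almost centered if and only if either `h_{i-1} ≤ h_{D-i} ≤ h_i` for all `0 ≤ i ≤ ⌊D/2⌋`, or
`h_{D-i+1} ≤ h_i ≤ h_{D-i}` for all `0 ≤ i ≤ ⌊D/2⌋`. -/
theorem statement_16 {k A : Type} [Field k] [CharZero k]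
    [CommRing A] [Algebra k A]
    (𝒜 : ℤ → Submodule k A) (hA : IsStdGradedArtinian k A 𝒜)
    (D : ℕ) (hsocle : 𝒜 (D : ℤ) ≠ ⊥) (htop : ∀ j : ℤ, (D : ℤ) < j → 𝒜 j = ⊥)
    (hSLP : HasSLP 𝒜) :
    AlmostCentered 𝒜 ↔
      ((∀ i : ℕ, i ≤ D / 2 →
          hilb 𝒜 ((i : ℤ) - 1) ≤ hilb 𝒜 ((D : ℤ) - i) ∧
          hilb 𝒜 ((D : ℤ) - i) ≤ hilb 𝒜 (i : ℤ)) ∨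
       (∀ i : ℕ, i ≤ D / 2 →
          hilb 𝒜 ((D : ℤ) - i + 1) ≤ hilb 𝒜 (i : ℤ) ∧
          hilb 𝒜 (i : ℤ) ≤ hilb 𝒜 ((D : ℤ) - i))) := by
  classical
  have hfin := hA.finiteDim
  set h : ℤ → ℕ := hilb 𝒜 with hh
  -- basic facts about h
  have hneg : ∀ i : ℤ, i < 0 → h i = 0 := by
    intro i hi
    rw [hh, hilb, hA.neg_bot i hi, finrank_bot]
  have htop0 : ∀ j : ℤ, (D : ℤ) < j → h j = 0 := by
    intro j hj
    rw [hh, hilb, htop j hj, finrank_bot]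
  obtain ⟨v, hvD, hv0⟩ := (Submodule.ne_bot_iff _).mp hsocle
  have hD1 : 1 ≤ h (D : ℤ) := by
    have hspan : Submodule.span k {v} ≤ 𝒜 (D : ℤ) :=
      Submodule.span_le.mpr (by simpa using hvD)
    calc 1 = Module.finrank k (Submodule.span k {v}) :=
          (finrank_span_singleton hv0).symm
      _ ≤ Module.finrank k (𝒜 (D : ℤ)) := Submodule.finrank_mono hspan
      _ = h (D : ℤ) := rfl
  have hnt : Nontrivial A := ⟨⟨v, 0, hv0⟩⟩
  have h01 : 1 ≤ h 0 := by
    rw [hh, hilb, hA.zero_spanOne, finrank_span_singleton ((one_ne_zero : (1 : A) ≠ 0))]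
  -- unimodality consequence of SLP
  obtain ⟨ℓ, hℓ1, hSL⟩ := hSLP
  have hfr : ∀ i : ℤ, 0 ≤ i → MulFullRank (𝒜 i) (𝒜 (i + 1)) ℓ := by
    intro i hi
    have := hSL i hi 1 le_rfl
    simpa using this
  have S : ∀ x y : ℤ, x ≤ y → h (x + 1) < h x → h (y + 1) ≤ h y :=
    surj_propagate hA hℓ1 hfr
  constructor
  · -- AlmostCentered → condition
    intro hAC
    have key : ∀ c : ℤ, LeftDom h c ∨ RightDom h c := fun c =>
      ac_dom h (fun i j hij => hAC i j hij) c
    have QD1 : RightDom h ((D : ℤ) - 1) := by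
      refine (key ((D : ℤ) - 1)).resolve_left ?_
      intro hp
      have := hp (-1) (D : ℤ) (by omega) (by ring)
      rw [hneg (-1) (by omega)] at this
      omega
    have nQ : ¬ RightDom h ((D : ℤ) + 1) := by
      intro hq
      have := hq 0 ((D : ℤ) + 1) (by omega) (by ring)
      rw [htop0 ((D : ℤ) + 1) (by omega)] at this
      omega
    by_cases hQD : RightDom h (D : ℤ)
    · right
      have PD1 : LeftDom h ((D : ℤ) + 1) := (key ((D : ℤ) + 1)).resolve_right nQ
      intro i hi
      constructor
      · exact PD1 (i : ℤ) ((D : ℤ) - i + 1) (by omega) (by ring)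
      · exact hQD (i : ℤ) ((D : ℤ) - i) (by omega) (by ring)
    · left
      have PD : LeftDom h (D : ℤ) := (key (D : ℤ)).resolve_right hQD
      intro i hi
      exact ⟨QD1 ((i : ℤ) - 1) ((D : ℤ) - i) (by omega) (by ring),
        PD (i : ℤ) ((D : ℤ) - i) (by omega) (by ring)⟩
  · -- condition → AlmostCentered
    intro hcond
    have key : ∀ c : ℤ, LeftDom h c ∨ RightDom h c := by
      rcases hcond with hI | hII
      · have PD : LeftDom h (D : ℤ) := by
          intro a b hab hsum
          rcases lt_or_ge a 0 with ha | ha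
          · rw [htop0 b (by omega)]; exact Nat.zero_le _
          · have := (hI a.toNat (by omega)).2
            have e1 : ((a.toNat : ℕ) : ℤ) = a := by omega
            have e2 : (D : ℤ) - (a.toNat : ℕ) = b := by omega
            rw [e2, e1] at this
            exact this
        have QD1 : RightDom h ((D : ℤ) - 1) := by
          intro a b hab hsum
          rcases eq_or_lt_of_le hab with heq | hlt
          · rw [heq]
          rcases lt_or_ge a 0 with ha | ha
          · rw [hneg a ha]; exact Nat.zero_le _
          · have := (hI (a.toNat + 1) (by omega)).1
            have e1 : (((a.toNat + 1 : ℕ)) : ℤ) - 1 = a := by omega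
            have e2 : (D : ℤ) - ((a.toNat + 1 : ℕ)) = b := by omega
            rw [e2, e1] at this
            exact this
        intro c
        rcases le_or_gt (D : ℤ) c with h1 | h1
        · exact Or.inl (leftDom_mono h S (D : ℤ) PD c h1)
        · exact Or.inr (rightDom_mono h S ((D : ℤ) - 1) QD1 c (by omega))
      · have PD1 : LeftDom h ((D : ℤ) + 1) := by
          intro a b hab hsum
          rcases eq_or_lt_of_le hab with heq | hlt
          · rw [heq]
          rcases lt_or_ge a 0 with ha | ha
          · rw [htop0 b (by omega)]; exact Nat.zero_le _
          · have := (hII a.toNat (by omega)).1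
            have e1 : ((a.toNat : ℕ) : ℤ) = a := by omega
            have e2 : (D : ℤ) - (a.toNat : ℕ) + 1 = b := by omega
            rw [e2, e1] at this
            exact this
        have QD : RightDom h (D : ℤ) := by
          intro a b hab hsum
          rcases lt_or_ge a 0 with ha | ha
          · rw [hneg a ha]; exact Nat.zero_le _
          · have := (hII a.toNat (by omega)).2
            have e1 : ((a.toNat : ℕ) : ℤ) = a := by omega
            have e2 : (D : ℤ) - (a.toNat : ℕ) = b := by omega
            rw [e2, e1] at this
            exact this
        intro c
        rcases le_or_gt ((D : ℤ) + 1) c with h1 | h1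
        · exact Or.inl (leftDom_mono h S ((D : ℤ) + 1) PD1 c h1)
        · exact Or.inr (rightDom_mono h S (D : ℤ) QD c (by omega))
    intro i j hij
    constructor
    · intro hlt s
      rw [← hh] at hlt
      have hnp : ¬ LeftDom h (i + j) := by
        intro hp
        have := hp i j (le_of_lt hij) rfl
        omega
      have hq := (key (i + j)).resolve_left hnp
      exact hq (i - s) (j + s) (by omega) (by omega)
    · intro hlt s
      rw [← hh] at hlt
      have hnq : ¬ RightDom h (i + j) := by
        intro hq
        have := hq i j (le_of_lt hij) rfl
        omega
      have hp := (key (i + j)).resolve_right hnq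
      exact hp (i - s) (j + s) (by omega) (by omega)
end
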